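/- arXiv:1912.13343 — 2 statements merged into one kernel-verified Lean document; each statement's English description precedes it below -/
import Mathlib

section
/- Let ũ be a Schwartz function on ℝ^{n+1} and define w(y') := ũ(0, y') for y' ∈ ℝ^n. Then ∫_{ℝ^n} (1 + 4π²|ξ'|²)^{1/2} |ℱw(ξ')|² dξ' ≤ (1/2) ∫_{ℝ^{n+1}} (1 + 4π²|ξ|²) |ℱũ(ξ)|² dξ, where ℱ denotes the Fourier transform with kernel e^{-2πi y·ξ}. -/
open scoped FourierTransform
open scoped RealInnerProductSpace ENNReal NNReal
open MeasureTheory Real SchwartzMap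

noncomputable section
namespace TraceAux2

variable {n : ℕ}

def consE (n : ℕ) (t : ℝ) (x : EuclideanSpace ℝ (Fin n)) : EuclideanSpace ℝ (Fin (n + 1)) :=
  (WithLp.equiv 2 (Fin (n + 1) → ℝ)).symm (Fin.cons t ((WithLp.equiv 2 (Fin n → ℝ)) x))

lemma norm_consE_sq (t : ℝ) (x : EuclideanSpace ℝ (Fin n)) :
    ‖consE n t x‖ ^ 2 = t ^ 2 + ‖x‖ ^ 2 := by
  rw [EuclideanSpace.norm_eq, EuclideanSpace.norm_eq,
    Real.sq_sqrt (by positivity), Real.sq_sqrt (by positivity)]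
  simp [consE, Fin.sum_univ_succ, sq_abs]

lemma inner_consE (t s : ℝ) (x y : EuclideanSpace ℝ (Fin n)) :
    ⟪consE n t x, consE n s y⟫ = t * s + ⟪x, y⟫ := by
  simp [consE, PiLp.inner_apply, Fin.sum_univ_succ]
  ring

def consLI (n : ℕ) : EuclideanSpace ℝ (Fin n) →ₗᵢ[ℝ] EuclideanSpace ℝ (Fin (n + 1)) where
  toFun := consE n 0
  map_add' x y := by
    ext i
    induction i using Fin.cases <;> simp [consE]
  map_smul' c x := by
    ext i
    induction i using Fin.cases <;> simp [consE]
  norm_map' x := by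
    have h := norm_consE_sq (n := n) 0 x
    show ‖consE n 0 x‖ = ‖x‖
    rw [← Real.sqrt_sq (norm_nonneg (consE n 0 x)), ← Real.sqrt_sq (norm_nonneg x), h]
    norm_num

def splitEquiv (n : ℕ) : EuclideanSpace ℝ (Fin (n + 1)) ≃ᵐ ℝ × EuclideanSpace ℝ (Fin n) :=
  (((MeasurableEquiv.toLp 2 (Fin (n + 1) → ℝ)).symm).trans
    (MeasurableEquiv.piFinSuccAbove (fun _ => ℝ) 0)).trans
    ((MeasurableEquiv.refl ℝ).prodCongr ((MeasurableEquiv.toLp 2 (Fin n → ℝ)).symm).symm)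

lemma splitEquiv_symm_apply (p : ℝ × EuclideanSpace ℝ (Fin n)) :
    (splitEquiv n).symm p = consE n p.1 p.2 := by
  ext i
  induction i using Fin.cases <;>
    simp [splitEquiv, consE, MeasurableEquiv.piFinSuccAbove, MeasurableEquiv.trans,
      MeasurableEquiv.symm, MeasurableEquiv.prodCongr, MeasurableEquiv.refl, Fin.consEquiv,
      MeasurableEquiv.toLp, MeasurableEquiv.coe_mk]

lemma measurePreserving_splitEquiv :
    MeasurePreserving (splitEquiv n) volume volume := by
  have h1 := EuclideanSpace.volume_preserving_symm_measurableEquiv_toLp (Fin (n + 1))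
  have h2 := MeasureTheory.volume_preserving_piFinSuccAbove (fun _ : Fin (n + 1) => ℝ) 0
  have h3 : MeasurePreserving
      ((MeasurableEquiv.refl ℝ).prodCongr ((MeasurableEquiv.toLp 2 (Fin n → ℝ)).symm).symm)
      volume volume :=
    (MeasurePreserving.id volume).prod
      (EuclideanSpace.volume_preserving_symm_measurableEquiv_toLp (Fin n)).symm
  exact h3.comp (h2.comp h1)


lemma integral_kernel {c : ℝ} (hc : 0 < c) :
    ∫ t : ℝ, (c ^ 2 + (2 * π * t) ^ 2)⁻¹ = 1 / (2 * c) := by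
  have h2π : (2 * π) ≠ 0 := by positivity
  have h1 : ∀ t : ℝ, (c ^ 2 + (2 * π * t) ^ 2)⁻¹
      = (fun x : ℝ => (c ^ 2 + x ^ 2)⁻¹) ((2 * π) * t) := fun t => rfl
  rw [show (fun t : ℝ => (c ^ 2 + (2 * π * t) ^ 2)⁻¹)
      = fun t => (fun x : ℝ => (c ^ 2 + x ^ 2)⁻¹) ((2 * π) * t) from rfl]
  rw [MeasureTheory.Measure.integral_comp_mul_left (fun x : ℝ => (c ^ 2 + x ^ 2)⁻¹) (2 * π)]
  have h2 : ∀ x : ℝ, (c ^ 2 + x ^ 2)⁻¹ = (c⁻¹ * c⁻¹) * (1 + (c⁻¹ * x) ^ 2)⁻¹ := by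
    intro x
    rw [mul_pow, ← mul_inv]
    congr 1
    field_simp
  simp_rw [h2]
  rw [MeasureTheory.integral_const_mul]
  rw [show (fun x : ℝ => (1 + (c⁻¹ * x) ^ 2)⁻¹)
      = fun x => (fun y : ℝ => (1 + y ^ 2)⁻¹) (c⁻¹ * x) from rfl]
  rw [MeasureTheory.Measure.integral_comp_mul_left (fun y : ℝ => (1 + y ^ 2)⁻¹) c⁻¹]
  rw [integral_univ_inv_one_add_sq]
  simp only [smul_eq_mul, inv_inv]
  rw [abs_of_pos (by positivity : (0:ℝ) < (2*π)⁻¹), abs_of_pos hc]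
  field_simp

lemma integrable_kernel {c : ℝ} (hc : 0 < c) :
    Integrable (fun t : ℝ => (c ^ 2 + (2 * π * t) ^ 2)⁻¹) := by
  have h2 : ∀ t : ℝ, (c ^ 2 + (2 * π * t) ^ 2)⁻¹
      = (c⁻¹ * c⁻¹) * (1 + ((c⁻¹ * (2 * π)) * t) ^ 2)⁻¹ := by
    intro t
    rw [show (c⁻¹ * (2 * π)) * t = c⁻¹ * (2 * π * t) by ring]
    rw [mul_pow, ← mul_inv]
    congr 1
    field_simp
  simp_rw [h2]
  apply Integrable.const_mul
  have hk : (c⁻¹ * (2 * π)) ≠ 0 := by positivity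
  exact (integrable_comp_mul_left_iff (fun y : ℝ => (1 + y ^ 2)⁻¹) hk).2
    integrable_inv_one_add_sq

lemma lintegral_kernel {b : ℝ} (hb : 0 ≤ b) :
    ∫⁻ t : ℝ, (ENNReal.ofReal (1 + 4 * π ^ 2 * (t ^ 2 + b)))⁻¹
      = ENNReal.ofReal (1 / (2 * Real.sqrt (1 + 4 * π ^ 2 * b))) := by
  set c : ℝ := Real.sqrt (1 + 4 * π ^ 2 * b) with hcdef
  have hc : 0 < c := Real.sqrt_pos.2 (by positivity)
  have hc2 : c ^ 2 = 1 + 4 * π ^ 2 * b := Real.sq_sqrt (by positivity)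
  have hpt : ∀ t : ℝ, 1 + 4 * π ^ 2 * (t ^ 2 + b) = c ^ 2 + (2 * π * t) ^ 2 := by
    intro t; rw [hc2]; ring
  have hpos : ∀ t : ℝ, 0 < 1 + 4 * π ^ 2 * (t ^ 2 + b) := fun t => by positivity
  have h1 : ∀ t : ℝ, (ENNReal.ofReal (1 + 4 * π ^ 2 * (t ^ 2 + b)))⁻¹
      = ENNReal.ofReal ((c ^ 2 + (2 * π * t) ^ 2)⁻¹) := by
    intro t
    rw [← ENNReal.ofReal_inv_of_pos (hpos t), hpt]
  simp_rw [h1]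
  rw [← MeasureTheory.ofReal_integral_eq_lintegral_ofReal (integrable_kernel hc)
    (Filter.Eventually.of_forall fun t => by positivity)]
  rw [integral_kernel hc]

end TraceAux2


namespace TraceAux2

lemma measurePreserving_splitEquiv_symm :
    MeasurePreserving (splitEquiv n).symm volume volume :=
  (measurePreserving_splitEquiv (n := n)).symm (splitEquiv n)

lemma lintegral_split (f : EuclideanSpace ℝ (Fin (n + 1)) → ℝ≥0∞) (hf : AEMeasurable f) :
    ∫⁻ ξ, f ξ = ∫⁻ t : ℝ, ∫⁻ x, f (consE n t x) := by
  rw [← measurePreserving_splitEquiv_symm.lintegral_comp_emb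
    (MeasurableEquiv.measurableEmbedding _) f]
  simp only [splitEquiv_symm_apply]
  rw [MeasureTheory.Measure.volume_eq_prod, lintegral_prod]
  have h1 : AEMeasurable (fun p : ℝ × EuclideanSpace ℝ (Fin n) => f ((splitEquiv n).symm p))
      (volume.prod volume) := by
    rw [← MeasureTheory.Measure.volume_eq_prod]
    exact hf.comp_quasiMeasurePreserving measurePreserving_splitEquiv_symm.quasiMeasurePreserving
  exact h1.congr (Filter.Eventually.of_forall fun p => by simp only [splitEquiv_symm_apply])

lemma integrable_split_iff (f : EuclideanSpace ℝ (Fin (n + 1)) → ℂ) :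
    Integrable (fun p : ℝ × EuclideanSpace ℝ (Fin n) => f (consE n p.1 p.2))
      (volume.prod volume) ↔ Integrable f := by
  rw [← MeasureTheory.Measure.volume_eq_prod]
  rw [← measurePreserving_splitEquiv_symm.integrable_comp_emb
    (MeasurableEquiv.measurableEmbedding _)]
  constructor <;> intro h <;> refine h.congr (Filter.Eventually.of_forall fun p => ?_) <;>
    simp [Function.comp, splitEquiv_symm_apply]

lemma integral_split (f : EuclideanSpace ℝ (Fin (n + 1)) → ℂ) (hf : Integrable f) :
    ∫ ξ, f ξ = ∫ t : ℝ, ∫ x, f (consE n t x) := by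
  rw [← measurePreserving_splitEquiv_symm.integral_comp
    (MeasurableEquiv.measurableEmbedding _) f]
  simp only [splitEquiv_symm_apply]
  rw [MeasureTheory.Measure.volume_eq_prod, integral_prod]
  exact (integrable_split_iff f).2 hf

lemma continuous_consE_pair :
    Continuous fun p : ℝ × EuclideanSpace ℝ (Fin n) => consE n p.1 p.2 := by
  have hs : Continuous fun t : ℝ => EuclideanSpace.single (0 : Fin (n + 1)) t := by
    have : (fun t : ℝ => EuclideanSpace.single (0 : Fin (n + 1)) t)
        = fun t : ℝ => t • EuclideanSpace.single (0 : Fin (n + 1)) (1 : ℝ) := by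
      funext t; ext i; simp [EuclideanSpace.single_apply, smul_eq_mul, mul_ite]
    rw [this]
    exact continuous_id.smul continuous_const
  have heq : (fun p : ℝ × EuclideanSpace ℝ (Fin n) => consE n p.1 p.2)
      = fun p => EuclideanSpace.single (0 : Fin (n + 1)) p.1 + consLI n p.2 := by
    funext p; ext i
    induction i using Fin.cases <;>
      simp [EuclideanSpace.single_apply, consLI, consE, Fin.succ_ne_zero]
  rw [heq]
  exact (hs.comp continuous_fst).add ((consLI n).continuous.comp continuous_snd)

lemma exists_decay (f : SchwartzMap (EuclideanSpace ℝ (Fin (n + 1))) ℂ) :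
    ∃ C : ℝ, 0 ≤ C ∧ ∀ x, (1 + ‖x‖) ^ 2 * ‖f x‖ ≤ C := by
  obtain ⟨C, hC⟩ : ∃ C : ℝ, ∀ x, (1 + ‖x‖) ^ 2 * ‖f x‖ ≤ C := by
    refine ⟨2 ^ 2 * (Finset.Iic ((2, 0) : ℕ × ℕ)).sup
      (fun m => SchwartzMap.seminorm ℝ m.1 m.2) f, fun x => ?_⟩
    have := SchwartzMap.one_add_le_sup_seminorm_apply (𝕜 := ℝ) (m := (2, 0)) le_rfl le_rfl f x
    simpa [norm_iteratedFDeriv_zero] using this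
  refine ⟨C, ?_, hC⟩
  have h0 := hC 0
  nlinarith [norm_nonneg (f (0 : EuclideanSpace ℝ (Fin (n + 1)))),
    norm_nonneg (0 : EuclideanSpace ℝ (Fin (n + 1)))]

def traceSM (u : SchwartzMap (EuclideanSpace ℝ (Fin (n + 1))) ℂ) :
    SchwartzMap (EuclideanSpace ℝ (Fin n)) ℂ :=
  SchwartzMap.compCLMOfAntilipschitz ℝ
    (by simpa [LinearIsometry.coe_toContinuousLinearMap] using
      ContinuousLinearMap.hasTemperateGrowth ((consLI n).toContinuousLinearMap))
    (consLI n).antilipschitz u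

lemma traceSM_apply (u : SchwartzMap (EuclideanSpace ℝ (Fin (n + 1))) ℂ)
    (y' : EuclideanSpace ℝ (Fin n)) : traceSM u y' = u (consE n 0 y') := rfl

lemma fourier_trace (u : SchwartzMap (EuclideanSpace ℝ (Fin (n + 1))) ℂ)
    (ξ' : EuclideanSpace ℝ (Fin n)) :
    𝓕 (fun y' : EuclideanSpace ℝ (Fin n) => u (consE n 0 y')) ξ'
      = ∫ t : ℝ, 𝓕 (⇑u) (consE n t ξ') := by
  set U : SchwartzMap (EuclideanSpace ℝ (Fin (n + 1))) ℂ := fourierTransformCLM ℝ u with hUdef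
  have hU : ⇑U = 𝓕 ⇑u := rfl
  rw [show (fun t : ℝ => 𝓕 (⇑u) (consE n t ξ')) = fun t => U (consE n t ξ') by rw [hU]]
  set g : EuclideanSpace ℝ (Fin n) → ℂ := fun η => ∫ t : ℝ, U (consE n t η) with hg
  have hprod : Integrable (fun p : ℝ × EuclideanSpace ℝ (Fin n) => U (consE n p.1 p.2))
      (volume.prod volume) := (integrable_split_iff _).2 U.integrable
  obtain ⟨C, hC0, hC⟩ := exists_decay U
  have hUb : ∀ (t : ℝ) (η : EuclideanSpace ℝ (Fin n)),
      ‖U (consE n t η)‖ ≤ C * (1 + t ^ 2)⁻¹ := by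
    intro t η
    have h2 : 1 + t ^ 2 ≤ (1 + ‖consE n t η‖) ^ 2 := by
      have h3 := norm_consE_sq t η
      nlinarith [norm_nonneg (consE n t η), norm_nonneg η, sq_nonneg t]
    have h4 : (1 + t ^ 2) * ‖U (consE n t η)‖ ≤ C :=
      le_trans (mul_le_mul_of_nonneg_right h2 (norm_nonneg _)) (hC _)
    have h5 : ‖U (consE n t η)‖ ≤ C / (1 + t ^ 2) :=
      (le_div_iff₀ (by positivity)).2 (by rw [mul_comm]; exact h4)
    simpa [div_eq_mul_inv] using h5
  have hgc : Continuous g := by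
    refine continuous_of_dominated (bound := fun t : ℝ => C * (1 + t ^ 2)⁻¹)
      (fun η => ?_) (fun η => Filter.Eventually.of_forall fun t => hUb t η)
      (integrable_inv_one_add_sq.const_mul C)
      (Filter.Eventually.of_forall fun t => ?_)
    · exact (U.continuous.comp (continuous_consE_pair.comp
        (continuous_id.prodMk continuous_const))).aestronglyMeasurable
    · exact U.continuous.comp (continuous_consE_pair.comp
        (continuous_const.prodMk continuous_id))
  have hgi : Integrable g := hprod.integral_prod_right
  have hinv : ∀ y', 𝓕⁻ g y' = u (consE n 0 y') := by
    intro y'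
    rw [Real.fourierInv_eq']
    have h1 : ∀ η : EuclideanSpace ℝ (Fin n),
        Complex.exp ((2 * π * ⟪η, y'⟫ : ℝ) * Complex.I) • g η
          = ∫ t : ℝ, Complex.exp ((2 * π * ⟪η, y'⟫ : ℝ) * Complex.I) * U (consE n t η) := by
      intro η
      rw [smul_eq_mul, hg]
      exact (integral_const_mul _ _).symm
    simp_rw [h1]
    have hkc : Continuous fun p : ℝ × EuclideanSpace ℝ (Fin n) =>
        Complex.exp ((2 * π * ⟪p.2, y'⟫ : ℝ) * Complex.I) := by
      apply Complex.continuous_exp.comp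
      exact (Complex.continuous_ofReal.comp
        ((continuous_const.mul (continuous_snd.inner continuous_const)))).mul continuous_const
    have hsm : Integrable (fun p : ℝ × EuclideanSpace ℝ (Fin n) =>
        Complex.exp ((2 * π * ⟪p.2, y'⟫ : ℝ) * Complex.I) * U (consE n p.1 p.2))
        (volume.prod volume) := by
      refine hprod.norm.mono' ((hkc.mul (U.continuous.comp
        continuous_consE_pair)).aestronglyMeasurable)
        (Filter.Eventually.of_forall fun p => ?_)
      simp [Complex.norm_exp]
    have hsw : Integrable (Function.uncurry fun (η : EuclideanSpace ℝ (Fin n)) (t : ℝ) =>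
        Complex.exp ((2 * π * ⟪η, y'⟫ : ℝ) * Complex.I) * U (consE n t η))
        (volume.prod volume) := hsm.swap
    rw [integral_integral_swap hsw]
    have h2 : ∀ (t : ℝ) (η : EuclideanSpace ℝ (Fin n)),
        Complex.exp ((2 * π * ⟪η, y'⟫ : ℝ) * Complex.I) * U (consE n t η)
          = Complex.exp ((2 * π * ⟪consE n t η, consE n 0 y'⟫ : ℝ) * Complex.I)
            * U (consE n t η) := by
      intro t η
      rw [inner_consE]
      norm_num
    simp_rw [h2]
    have hFi : Integrable (fun ξ : EuclideanSpace ℝ (Fin (n + 1)) =>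
        Complex.exp ((2 * π * ⟪ξ, consE n 0 y'⟫ : ℝ) * Complex.I) * U ξ) := by
      refine U.integrable.norm.mono' ?_ (Filter.Eventually.of_forall fun ξ => by
        simp [Complex.norm_exp])
      exact ((Complex.continuous_exp.comp ((Complex.continuous_ofReal.comp
        ((continuous_const.mul (continuous_id.inner continuous_const)))).mul
        continuous_const)).mul U.continuous).aestronglyMeasurable
    rw [← integral_split _ hFi]
    have h6 : (∫ ξ : EuclideanSpace ℝ (Fin (n + 1)),
        Complex.exp ((2 * π * ⟪ξ, consE n 0 y'⟫ : ℝ) * Complex.I) * U ξ)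
          = 𝓕⁻ (⇑U) (consE n 0 y') := by
      rw [Real.fourierInv_eq']
      simp_rw [smul_eq_mul]
    rw [h6, hU]
    rw [u.continuous.fourierInv_fourier_eq u.integrable (by rw [← hU]; exact U.integrable)]
  have h𝓕g : Integrable (𝓕 g) := by
    have he : 𝓕 g = fun ξ => u (consE n 0 (-ξ)) := by
      funext ξ
      have h5 := Real.fourierInv_eq_fourier_neg g (-ξ)
      rw [neg_neg] at h5
      rw [← h5, hinv]
    rw [he]
    have hW : Integrable (fun y' : EuclideanSpace ℝ (Fin n) => u (consE n 0 y')) :=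
      (traceSM u).integrable
    have := (integrable_comp_smul_iff (volume : Measure (EuclideanSpace ℝ (Fin n)))
      (fun y' => u (consE n 0 y')) (R := (-1 : ℝ)) (by norm_num)).2 hW
    refine this.congr (Filter.Eventually.of_forall fun ξ => ?_)
    simp
  have hfinal := hgi.fourier_fourierInv_eq (v := ξ') h𝓕g hgc.continuousAt
  rw [show (fun y' : EuclideanSpace ℝ (Fin n) => u (consE n 0 y')) = 𝓕⁻ g from
    (funext hinv).symm]
  exact hfinal



lemma pointwise_bound (u : SchwartzMap (EuclideanSpace ℝ (Fin (n + 1))) ℂ)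
    (ξ' : EuclideanSpace ℝ (Fin n)) :
    ENNReal.ofReal (Real.sqrt (1 + 4 * π ^ 2 * ‖ξ'‖ ^ 2)
        * ‖𝓕 (fun y' : EuclideanSpace ℝ (Fin n) => u (consE n 0 y')) ξ'‖ ^ 2)
      ≤ ENNReal.ofReal (1 / 2) * ∫⁻ t : ℝ,
          ENNReal.ofReal (1 + 4 * π ^ 2 * ‖consE n t ξ'‖ ^ 2)
            * (‖(fourierTransformCLM ℝ u) (consE n t ξ')‖₊ : ℝ≥0∞) ^ 2 := by
  set U : SchwartzMap (EuclideanSpace ℝ (Fin (n + 1))) ℂ := fourierTransformCLM ℝ u with hUdef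
  set b : ℝ := ‖ξ'‖ ^ 2 with hbdef
  have hb : 0 ≤ b := sq_nonneg _
  set c : ℝ := Real.sqrt (1 + 4 * π ^ 2 * b) with hcdef
  have hc : 0 < c := Real.sqrt_pos.2 (by positivity)
  set N : ℝ → ℝ≥0∞ := fun t => (‖U (consE n t ξ')‖₊ : ℝ≥0∞) with hNdef
  set G : ℝ → ℝ≥0∞ := fun t => ENNReal.ofReal (1 + 4 * π ^ 2 * (t ^ 2 + b)) with hGdef
  have hGcons : ∀ t : ℝ, ENNReal.ofReal (1 + 4 * π ^ 2 * ‖consE n t ξ'‖ ^ 2) = G t := by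
    intro t; rw [hGdef, norm_consE_sq]
  have hG0 : ∀ t, G t ≠ 0 := fun t => by
    simp only [hGdef, ne_eq, ENNReal.ofReal_eq_zero, not_le]; positivity
  have hGtop : ∀ t, G t ≠ ⊤ := fun t => ENNReal.ofReal_ne_top
  have hNcont : Continuous fun t : ℝ => U (consE n t ξ') :=
    U.continuous.comp (continuous_consE_pair.comp (continuous_id.prodMk continuous_const))
  have hNm : Measurable N := hNcont.measurable.enorm
  have hGm : Measurable G := ENNReal.measurable_ofReal.comp (by fun_prop)
  -- Step 1 : norm of the Fourier trace is at most the lintegral of N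
  have step1 : (‖𝓕 (fun y' : EuclideanSpace ℝ (Fin n) => u (consE n 0 y')) ξ'‖₊ : ℝ≥0∞)
      ≤ ∫⁻ t : ℝ, N t := by
    rw [fourier_trace u ξ']
    exact enorm_integral_le_lintegral_enorm _
  -- Step 2 : Cauchy-Schwarz
  have hpq : Real.HolderConjugate 2 2 := Real.HolderConjugate.two_two
  have step2 : ∫⁻ t : ℝ, N t
      ≤ (∫⁻ t : ℝ, (G t)⁻¹) ^ ((1:ℝ)/2) * (∫⁻ t : ℝ, G t * N t ^ 2) ^ ((1:ℝ)/2) := by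
    have hCS := ENNReal.lintegral_mul_le_Lp_mul_Lq volume hpq
      (f := fun t => (G t) ^ (-((1:ℝ)/2))) (g := fun t => (G t) ^ ((1:ℝ)/2) * N t)
      ((hGm.pow_const _).aemeasurable) (((hGm.pow_const _).mul hNm).aemeasurable)
    have h1 : ∀ t : ℝ, ((fun t => (G t) ^ (-((1:ℝ)/2))) * fun t => (G t) ^ ((1:ℝ)/2) * N t) t
        = N t := by
      intro t
      show (G t) ^ (-((1:ℝ)/2)) * ((G t) ^ ((1:ℝ)/2) * N t) = N t
      rw [← mul_assoc, ← ENNReal.rpow_add _ _ (hG0 t) (hGtop t)]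
      norm_num
    have h2 : ∀ t : ℝ, ((G t) ^ (-((1:ℝ)/2))) ^ (2:ℝ) = (G t)⁻¹ := by
      intro t
      rw [← ENNReal.rpow_mul]
      norm_num [ENNReal.rpow_neg_one]
    have h3 : ∀ t : ℝ, ((G t) ^ ((1:ℝ)/2) * N t) ^ (2:ℝ) = G t * N t ^ 2 := by
      intro t
      rw [ENNReal.mul_rpow_of_nonneg _ _ (by norm_num : (0:ℝ) ≤ 2),
        ← ENNReal.rpow_mul, ← ENNReal.rpow_natCast (N t) 2]
      norm_num
    simp only [h1, h2, h3] at hCS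
    simpa using hCS
  -- kernel integral
  have hker : ∫⁻ t : ℝ, (G t)⁻¹ = ENNReal.ofReal (1 / (2 * c)) := by
    simp only [hGdef]
    exact lintegral_kernel hb
  -- assemble
  have step3 : (‖𝓕 (fun y' : EuclideanSpace ℝ (Fin n) => u (consE n 0 y')) ξ'‖₊ : ℝ≥0∞) ^ 2
      ≤ ENNReal.ofReal (1 / (2 * c)) * ∫⁻ t : ℝ, G t * N t ^ 2 := by
    have h4 := pow_le_pow_left' (step1.trans step2) 2
    calc (‖𝓕 (fun y' : EuclideanSpace ℝ (Fin n) => u (consE n 0 y')) ξ'‖₊ : ℝ≥0∞) ^ 2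
        ≤ ((∫⁻ t : ℝ, (G t)⁻¹) ^ ((1:ℝ)/2) * (∫⁻ t : ℝ, G t * N t ^ 2) ^ ((1:ℝ)/2)) ^ 2 := h4
      _ = (∫⁻ t : ℝ, (G t)⁻¹) * ∫⁻ t : ℝ, G t * N t ^ 2 := by
          rw [mul_pow]
          congr 1 <;>
          · rw [← ENNReal.rpow_natCast (_ ^ ((1:ℝ)/2)) 2, ← ENNReal.rpow_mul]
            norm_num
      _ = ENNReal.ofReal (1 / (2 * c)) * ∫⁻ t : ℝ, G t * N t ^ 2 := by rw [hker]
  have hLHS : ENNReal.ofReal (Real.sqrt (1 + 4 * π ^ 2 * ‖ξ'‖ ^ 2)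
      * ‖𝓕 (fun y' : EuclideanSpace ℝ (Fin n) => u (consE n 0 y')) ξ'‖ ^ 2)
      = ENNReal.ofReal c
        * (‖𝓕 (fun y' : EuclideanSpace ℝ (Fin n) => u (consE n 0 y')) ξ'‖₊ : ℝ≥0∞) ^ 2 := by
    rw [ENNReal.ofReal_mul (Real.sqrt_nonneg _), ENNReal.ofReal_pow (norm_nonneg _),
      ofReal_norm, enorm_eq_nnnorm]
  rw [hLHS]
  simp only [hGcons]
  calc ENNReal.ofReal c
      * (‖𝓕 (fun y' : EuclideanSpace ℝ (Fin n) => u (consE n 0 y')) ξ'‖₊ : ℝ≥0∞) ^ 2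
      ≤ ENNReal.ofReal c * (ENNReal.ofReal (1 / (2 * c)) * ∫⁻ t : ℝ, G t * N t ^ 2) :=
        mul_le_mul_right step3 _
    _ = ENNReal.ofReal (1 / 2) * ∫⁻ t : ℝ, G t * N t ^ 2 := by
        rw [← mul_assoc, ← ENNReal.ofReal_mul hc.le]
        congr 2
        field_simp

end TraceAux2

open TraceAux2

/-- Trace estimate in Fourier variables: for a Schwartz function `ũ` on `ℝ^{n+1}`
and its trace `w(y') := ũ(0, y')` on the hyperplane `{y₁ = 0}`,
`∫_{ℝⁿ} (1 + 4π²|ξ'|²)^{1/2} |ℱw(ξ')|² dξ' ≤ (1/2) ∫_{ℝ^{n+1}} (1 + 4π²|ξ|²) |ℱũ(ξ)|² dξ`. -/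
theorem schwartz_trace_fourier_estimate (n : ℕ)
    (u : SchwartzMap (EuclideanSpace ℝ (Fin (n + 1))) ℂ) :
    (∫ ξ' : EuclideanSpace ℝ (Fin n),
        Real.sqrt (1 + 4 * Real.pi ^ 2 * ‖ξ'‖ ^ 2) *
          ‖𝓕 (fun y' : EuclideanSpace ℝ (Fin n) =>
              u ((WithLp.equiv 2 (Fin (n + 1) → ℝ)).symm
                  (Fin.cons 0 (fun j => (WithLp.equiv 2 (Fin n → ℝ)) y' j)))) ξ'‖ ^ 2)
      ≤ (1 / 2) * ∫ ξ : EuclideanSpace ℝ (Fin (n + 1)),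
          (1 + 4 * Real.pi ^ 2 * ‖ξ‖ ^ 2) * ‖𝓕 (⇑u) ξ‖ ^ 2 := by
  have hwfun : (fun y' : EuclideanSpace ℝ (Fin n) =>
      u ((WithLp.equiv 2 (Fin (n + 1) → ℝ)).symm
        (Fin.cons 0 (fun j => (WithLp.equiv 2 (Fin n → ℝ)) y' j))))
      = fun y' : EuclideanSpace ℝ (Fin n) => u (consE n 0 y') := rfl
  rw [hwfun]
  set U : SchwartzMap (EuclideanSpace ℝ (Fin (n + 1))) ℂ := fourierTransformCLM ℝ u with hUdef
  have hU : 𝓕 ⇑u = ⇑U := rfl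
  rw [hU]
  -- right-hand side integrand
  set F : EuclideanSpace ℝ (Fin (n + 1)) → ℝ :=
    fun ξ => (1 + 4 * π ^ 2 * ‖ξ‖ ^ 2) * ‖U ξ‖ ^ 2 with hFdef
  have hFc : Continuous F := by
    apply Continuous.mul
    · fun_prop
    · exact (U.continuous.norm).pow 2
  have hFnonneg : ∀ ξ, 0 ≤ F ξ := fun ξ => by positivity
  have hFi : Integrable F := by
    obtain ⟨C, hC0, hC⟩ := exists_decay U
    have hCb : ∀ x, ‖U x‖ ≤ C := by
      intro x
      have h1 := hC x
      nlinarith [norm_nonneg x, norm_nonneg (U x),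
        mul_nonneg (norm_nonneg x) (norm_nonneg (U x)),
        mul_nonneg (mul_nonneg (norm_nonneg x) (norm_nonneg x)) (norm_nonneg (U x))]
    have hg : Integrable (fun ξ : EuclideanSpace ℝ (Fin (n + 1)) =>
        C * ‖U ξ‖ + (4 * π ^ 2 * C) * (‖ξ‖ ^ 2 * ‖U ξ‖)) :=
      (U.integrable.norm.const_mul C).add ((U.integrable_pow_mul volume 2).const_mul _)
    refine hg.mono' hFc.aestronglyMeasurable (Filter.Eventually.of_forall fun ξ => ?_)
    rw [Real.norm_of_nonneg (hFnonneg ξ)]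
    simp only [hFdef]
    have h2 : ‖U ξ‖ ^ 2 ≤ C * ‖U ξ‖ := by nlinarith [norm_nonneg (U ξ), hCb ξ]
    nlinarith [norm_nonneg (U ξ), sq_nonneg ‖ξ‖, h2,
      mul_nonneg (norm_nonneg (U ξ)) (sub_nonneg.2 (hCb ξ)),
      mul_nonneg (by positivity : (0:ℝ) ≤ 4 * π ^ 2)
        (mul_nonneg (mul_nonneg (sq_nonneg ‖ξ‖) (norm_nonneg (U ξ))) (sub_nonneg.2 (hCb ξ)))]
  set Fe : EuclideanSpace ℝ (Fin (n + 1)) → ℝ≥0∞ :=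
    fun ξ => ENNReal.ofReal (1 + 4 * π ^ 2 * ‖ξ‖ ^ 2) * (‖U ξ‖₊ : ℝ≥0∞) ^ 2 with hFedef
  have hFem : Measurable Fe :=
    (ENNReal.measurable_ofReal.comp (by fun_prop)).mul
      ((U.continuous.measurable.enorm).pow_const 2)
  set R : ℝ≥0∞ := ∫⁻ ξ, Fe ξ with hRdef
  have hFeof : ∀ ξ, ENNReal.ofReal (F ξ) = Fe ξ := by
    intro ξ
    rw [hFdef, hFedef]
    simp only
    rw [ENNReal.ofReal_mul (by positivity), ENNReal.ofReal_pow (norm_nonneg _),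
      ofReal_norm, enorm_eq_nnnorm]
  have hRtop : R ≠ ⊤ := by
    have h1 : R ≤ ∫⁻ ξ, (‖F ξ‖₊ : ℝ≥0∞) := by
      rw [hRdef]
      refine lintegral_mono fun ξ => ?_
      rw [← hFeof]
      exact Real.ofReal_le_enorm _
    exact (lt_of_le_of_lt h1 hFi.2).ne
  have hRHS : ∫ ξ, F ξ = R.toReal := by
    rw [integral_eq_lintegral_of_nonneg_ae (Filter.Eventually.of_forall hFnonneg)
      hFc.aestronglyMeasurable]
    congr 1
    exact lintegral_congr fun ξ => hFeof ξ
  have hwcont : Continuous fun ξ' : EuclideanSpace ℝ (Fin n) =>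
      𝓕 (fun y' : EuclideanSpace ℝ (Fin n) => u (consE n 0 y')) ξ' :=
    (fourierTransformCLM ℝ (traceSM u)).continuous
  have hLHSm : AEStronglyMeasurable (fun ξ' : EuclideanSpace ℝ (Fin n) =>
      Real.sqrt (1 + 4 * π ^ 2 * ‖ξ'‖ ^ 2)
        * ‖𝓕 (fun y' : EuclideanSpace ℝ (Fin n) => u (consE n 0 y')) ξ'‖ ^ 2) volume := by
    apply Continuous.aestronglyMeasurable
    exact ((Real.continuous_sqrt.comp (by fun_prop)).mul ((hwcont.norm).pow 2))
  rw [show F = fun ξ => (1 + 4 * π ^ 2 * ‖ξ‖ ^ 2) * ‖U ξ‖ ^ 2 from rfl] at hRHS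
  rw [integral_eq_lintegral_of_nonneg_ae
    (Filter.Eventually.of_forall fun ξ' => by positivity) hLHSm, hRHS]
  have key : (∫⁻ ξ' : EuclideanSpace ℝ (Fin n), ENNReal.ofReal
      (Real.sqrt (1 + 4 * π ^ 2 * ‖ξ'‖ ^ 2)
        * ‖𝓕 (fun y' : EuclideanSpace ℝ (Fin n) => u (consE n 0 y')) ξ'‖ ^ 2))
      ≤ ENNReal.ofReal (1 / 2) * R := by
    have swapm : AEMeasurable (Function.uncurry fun (ξ' : EuclideanSpace ℝ (Fin n)) (t : ℝ) =>
        Fe (consE n t ξ')) ((volume : Measure (EuclideanSpace ℝ (Fin n))).prod volume) := by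
      apply Measurable.aemeasurable
      exact hFem.comp (continuous_consE_pair.measurable.comp measurable_swap)
    calc (∫⁻ ξ' : EuclideanSpace ℝ (Fin n), ENNReal.ofReal
        (Real.sqrt (1 + 4 * π ^ 2 * ‖ξ'‖ ^ 2)
          * ‖𝓕 (fun y' : EuclideanSpace ℝ (Fin n) => u (consE n 0 y')) ξ'‖ ^ 2))
        ≤ ∫⁻ ξ' : EuclideanSpace ℝ (Fin n),
            ENNReal.ofReal (1 / 2) * ∫⁻ t : ℝ, Fe (consE n t ξ') :=
          lintegral_mono fun ξ' => pointwise_bound u ξ'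
      _ = ENNReal.ofReal (1 / 2) * ∫⁻ ξ' : EuclideanSpace ℝ (Fin n), ∫⁻ t : ℝ,
            Fe (consE n t ξ') := lintegral_const_mul' _ _ ENNReal.ofReal_ne_top
      _ = ENNReal.ofReal (1 / 2) * R := by
          congr 1
          rw [hRdef, lintegral_split Fe hFem.aemeasurable, lintegral_lintegral_swap swapm]
  calc (∫⁻ ξ' : EuclideanSpace ℝ (Fin n), ENNReal.ofReal
      (Real.sqrt (1 + 4 * π ^ 2 * ‖ξ'‖ ^ 2)
        * ‖𝓕 (fun y' : EuclideanSpace ℝ (Fin n) => u (consE n 0 y')) ξ'‖ ^ 2)).toReal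
      ≤ (ENNReal.ofReal (1 / 2) * R).toReal :=
        ENNReal.toReal_mono (ENNReal.mul_ne_top ENNReal.ofReal_ne_top hRtop) key
    _ = (1 / 2) * R.toReal := by
        rw [ENNReal.toReal_mul, ENNReal.toReal_ofReal (by norm_num)]
end
end

section
/- Let F: ℝ^d → M_{d×d}(ℝ) be a C^1 matrix field with det F(x) > 0 everywhere, satisfying the involution constraints F_{ℓk}(x) ∂_ℓ F_{ij}(x) = F_{ℓj}(x) ∂_ℓ F_{ik}(x) for all i, j, k ∈ {1,…,d} and all x. Then for each k ∈ {1,…,d}, the divergence ∂_ℓ((det F)^{-1} F_{ℓk}) = 0 identically. -/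
open scoped BigOperators

/-- Partial derivative `∂_ℓ g` of a scalar field on `ℝ^d`. -/
noncomputable def pd {d : ℕ} (g : (Fin d → ℝ) → ℝ) (ℓ : Fin d) (x : Fin d → ℝ) : ℝ :=
  fderiv ℝ g x (Pi.single ℓ 1)

open Matrix Finset

/-- If a `C¹` matrix field `F` with `det F > 0` satisfies the involution
constraints `F_{ℓk} ∂_ℓ F_{ij} = F_{ℓj} ∂_ℓ F_{ik}` (sums over `ℓ`), then
`∂_ℓ((det F)⁻¹ F_{ℓk}) = 0` for every `k`. -/
theorem divergence_constraint_of_involutions (d : ℕ)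
    (F : (Fin d → ℝ) → Fin d → Fin d → ℝ) (hF : ContDiff ℝ 1 F)
    (hdet : ∀ x : Fin d → ℝ, 0 < (Matrix.of (F x)).det)
    (hinv : ∀ (i j k : Fin d) (x : Fin d → ℝ),
      ∑ ℓ : Fin d, F x ℓ k * pd (fun y => F y i j) ℓ x
        = ∑ ℓ : Fin d, F x ℓ j * pd (fun y => F y i k) ℓ x) :
    ∀ (k : Fin d) (x : Fin d → ℝ),
      ∑ ℓ : Fin d, pd (fun y => ((Matrix.of (F y)).det)⁻¹ * F y ℓ k) ℓ x = 0 := by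
  intro k x
  have hFe : ∀ i j, ContDiff ℝ 1 (fun y => F y i j) := fun i j =>
    contDiff_pi.1 (contDiff_pi.1 hF i) j
  have hFd : ∀ i j, DifferentiableAt ℝ (fun y => F y i j) x := fun i j =>
    ((hFe i j).differentiable one_ne_zero).differentiableAt
  set A : Matrix (Fin d) (Fin d) ℝ := Matrix.of (F x) with hA
  have hAne : A.det ≠ 0 := ne_of_gt (hdet x)
  -- derivative of det ∘ F via the Leibniz formula
  have hdetD : HasFDerivAt (fun y => (Matrix.of (F y)).det)
      (∑ σ : Equiv.Perm (Fin d), ((Equiv.Perm.sign σ : ℤ) : ℝ) •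
        ∑ i, (∏ j ∈ Finset.univ.erase i, F x (σ j) j) •
          (fderiv ℝ (fun y => F y (σ i) i) x)) x := by
    have h1 : ∀ σ : Equiv.Perm (Fin d),
        HasFDerivAt (fun y => ∏ i, F y (σ i) i)
          (∑ i, (∏ j ∈ Finset.univ.erase i, F x (σ j) j) •
            (fderiv ℝ (fun y => F y (σ i) i) x)) x := fun σ =>
      HasFDerivAt.finset_prod (fun i _ => (hFd (σ i) i).hasFDerivAt)
    have h2 : HasFDerivAt (fun y => ∑ σ : Equiv.Perm (Fin d),
        ((Equiv.Perm.sign σ : ℤ) : ℝ) * ∏ i, F y (σ i) i)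
        (∑ σ : Equiv.Perm (Fin d), ((Equiv.Perm.sign σ : ℤ) : ℝ) •
          ∑ i, (∏ j ∈ Finset.univ.erase i, F x (σ j) j) •
            (fderiv ℝ (fun y => F y (σ i) i) x)) x :=
      HasFDerivAt.fun_sum (fun σ _ => (h1 σ).const_mul _)
    have hfun : (fun y => (Matrix.of (F y)).det)
        = fun y => ∑ σ : Equiv.Perm (Fin d),
            ((Equiv.Perm.sign σ : ℤ) : ℝ) * ∏ i, F y (σ i) i := by
      funext y
      rw [Matrix.det_apply']
      rfl
    rw [hfun]
    exact h2
  have hdetDiff : DifferentiableAt ℝ (fun y => (Matrix.of (F y)).det) x :=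
    hdetD.differentiableAt
  -- explicit formula for the partials of det ∘ F
  have pdDet : ∀ ℓ : Fin d, pd (fun y => (Matrix.of (F y)).det) ℓ x
      = ∑ σ : Equiv.Perm (Fin d), ((Equiv.Perm.sign σ : ℤ) : ℝ) *
          ∑ i, (∏ j ∈ Finset.univ.erase i, F x (σ j) j) *
            pd (fun y => F y (σ i) i) ℓ x := by
    intro ℓ
    rw [pd, hdetD.fderiv]
    simp only [ContinuousLinearMap.coe_sum', Finset.sum_apply,
      ContinuousLinearMap.coe_smul', Pi.smul_apply, smul_eq_mul, pd]
  -- expansion of the determinant of an updated column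
  have expand : ∀ (i : Fin d) (b : Fin d → ℝ),
      (A.updateCol i b).det = ∑ σ : Equiv.Perm (Fin d),
        ((Equiv.Perm.sign σ : ℤ) : ℝ) *
          (b (σ i) * ∏ j ∈ Finset.univ.erase i, F x (σ j) j) := by
    intro i b
    rw [Matrix.det_apply']
    refine Finset.sum_congr rfl fun σ _ => ?_
    congr 1
    rw [← Finset.mul_prod_erase Finset.univ _ (Finset.mem_univ i)]
    congr 1
    · simp [Matrix.updateCol_apply]
    · refine Finset.prod_congr rfl fun j hj => ?_
      rw [Matrix.updateCol_apply, if_neg (Finset.ne_of_mem_erase hj)]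
      rfl
  -- the partial of det in terms of Cramer's rule
  have pdDet' : ∀ ℓ : Fin d, pd (fun y => (Matrix.of (F y)).det) ℓ x
      = ∑ i, cramer A (fun r => pd (fun y => F y r i) ℓ x) i := by
    intro ℓ
    rw [pdDet ℓ]
    simp only [Matrix.cramer_apply, expand]
    rw [Finset.sum_comm]
    refine Finset.sum_congr rfl fun σ _ => ?_
    rw [Finset.mul_sum]
    refine Finset.sum_congr rfl fun i _ => ?_
    ring
  -- key identity: ∑ℓ F_{ℓk} ∂ℓ det = det ∑ℓ ∂ℓ F_{ℓk}
  have key : ∑ ℓ : Fin d, F x ℓ k * pd (fun y => (Matrix.of (F y)).det) ℓ x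
      = A.det * ∑ ℓ : Fin d, pd (fun y => F y ℓ k) ℓ x := by
    calc ∑ ℓ : Fin d, F x ℓ k * pd (fun y => (Matrix.of (F y)).det) ℓ x
        = ∑ ℓ : Fin d, ∑ i,
            cramer A (fun r => F x ℓ k * pd (fun y => F y r i) ℓ x) i := by
          refine Finset.sum_congr rfl fun ℓ _ => ?_
          rw [pdDet' ℓ, Finset.mul_sum]
          refine Finset.sum_congr rfl fun i _ => ?_
          have hs : (fun r => F x ℓ k * pd (fun y => F y r i) ℓ x)
              = F x ℓ k • (fun r => pd (fun y => F y r i) ℓ x) :=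
            funext fun r => rfl
          rw [hs, _root_.map_smul]
          simp [smul_eq_mul]
      _ = ∑ i, ∑ ℓ : Fin d,
            cramer A (fun r => F x ℓ k * pd (fun y => F y r i) ℓ x) i :=
          Finset.sum_comm
      _ = ∑ i, cramer A
            (fun r => ∑ ℓ : Fin d, F x ℓ k * pd (fun y => F y r i) ℓ x) i := by
          refine Finset.sum_congr rfl fun i _ => ?_
          exact Matrix.sum_cramer_apply A Finset.univ
            (fun r ℓ => F x ℓ k * pd (fun y => F y r i) ℓ x) i
      _ = ∑ i, cramer A
            (fun r => ∑ ℓ : Fin d, F x ℓ i * pd (fun y => F y r k) ℓ x) i := by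
          refine Finset.sum_congr rfl fun i _ => ?_
          have hb : (fun r => ∑ ℓ : Fin d, F x ℓ k * pd (fun y => F y r i) ℓ x)
              = fun r => ∑ ℓ : Fin d, F x ℓ i * pd (fun y => F y r k) ℓ x :=
            funext fun r => hinv r i k x
          rw [hb]
      _ = ∑ i, ∑ ℓ : Fin d,
            cramer A (fun r => F x ℓ i * pd (fun y => F y r k) ℓ x) i := by
          refine Finset.sum_congr rfl fun i _ => ?_
          exact (Matrix.sum_cramer_apply A Finset.univ
            (fun r ℓ => F x ℓ i * pd (fun y => F y r k) ℓ x) i).symm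
      _ = ∑ ℓ : Fin d, ∑ i,
            A ℓ i * cramer A (fun r => pd (fun y => F y r k) ℓ x) i := by
          rw [Finset.sum_comm]
          refine Finset.sum_congr rfl fun ℓ _ => Finset.sum_congr rfl fun i _ => ?_
          have hs : (fun r => F x ℓ i * pd (fun y => F y r k) ℓ x)
              = F x ℓ i • (fun r => pd (fun y => F y r k) ℓ x) :=
            funext fun r => rfl
          rw [hs, _root_.map_smul]
          simp only [Pi.smul_apply, smul_eq_mul]
          rfl
      _ = ∑ ℓ : Fin d, A.det * pd (fun y => F y ℓ k) ℓ x := by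
          refine Finset.sum_congr rfl fun ℓ _ => ?_
          have := congr_fun (Matrix.mulVec_cramer A
            (fun r => pd (fun y => F y r k) ℓ x)) ℓ
          simpa [Matrix.mulVec, dotProduct, smul_eq_mul] using this
      _ = A.det * ∑ ℓ : Fin d, pd (fun y => F y ℓ k) ℓ x := by
          rw [Finset.mul_sum]
  -- derivative of the inverse determinant
  have hinvD : HasFDerivAt (fun y => ((Matrix.of (F y)).det)⁻¹)
      ((ContinuousLinearMap.smulRight (1 : ℝ →L[ℝ] ℝ) (-(A.det ^ 2)⁻¹)).comp
        (fderiv ℝ (fun y => (Matrix.of (F y)).det) x)) x := by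
    have h1 := (hasDerivAt_inv hAne).hasFDerivAt
    exact h1.comp x hdetD.differentiableAt.hasFDerivAt
  have pdInv : ∀ ℓ : Fin d, pd (fun y => ((Matrix.of (F y)).det)⁻¹) ℓ x
      = -(A.det ^ 2)⁻¹ * pd (fun y => (Matrix.of (F y)).det) ℓ x := by
    intro ℓ
    rw [pd, hinvD.fderiv]
    simp only [ContinuousLinearMap.coe_comp', Function.comp_apply,
      ContinuousLinearMap.smulRight_apply, ContinuousLinearMap.one_apply,
      smul_eq_mul, pd]
    ring
  have hinvDiff : DifferentiableAt ℝ (fun y => ((Matrix.of (F y)).det)⁻¹) x :=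
    hinvD.differentiableAt
  -- product rule for each summand
  have pdMul : ∀ ℓ : Fin d,
      pd (fun y => ((Matrix.of (F y)).det)⁻¹ * F y ℓ k) ℓ x
        = pd (fun y => ((Matrix.of (F y)).det)⁻¹) ℓ x * F x ℓ k
          + (A.det)⁻¹ * pd (fun y => F y ℓ k) ℓ x := by
    intro ℓ
    rw [pd, fderiv_fun_mul hinvDiff (hFd ℓ k)]
    simp only [ContinuousLinearMap.add_apply, ContinuousLinearMap.coe_smul',
      Pi.smul_apply, smul_eq_mul, pd, hA]
    ring
  simp only [pdMul, pdInv]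
  rw [Finset.sum_add_distrib, ← Finset.mul_sum]
  have h1 : ∑ ℓ : Fin d, -(A.det ^ 2)⁻¹ *
      pd (fun y => (Matrix.of (F y)).det) ℓ x * F x ℓ k
      = -(A.det ^ 2)⁻¹ * (A.det * ∑ ℓ : Fin d, pd (fun y => F y ℓ k) ℓ x) := by
    rw [← key, Finset.mul_sum]
    refine Finset.sum_congr rfl fun ℓ _ => ?_
    ring
  rw [h1]
  field_simp
  ring
end
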